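/- For a fixed Markov policy: let $u_n : E \to U$ be measurable and define $T_n^{u_n} v(x) = c_n(x, u_n(x)) + \int_E v(y) P_n^{u_n(x)}(x, dy)$. If the Dobrushin coefficients $\Delta_n = \sup_{x,x'}\sup_{a,a'}\sup_B (P_n^a(x,B) - P_n^{a'}(x',B))$ satisfy $\Delta_n\cdots\Delta_{n+k}\to 0$ and $\sup_n R_n < \infty$, then given $\bar x \in E$ there exist unique bounded measurable functions $w_n^{u_n}$ with $w_n^{u_n}(\bar x) = 0$ and unique constants $\lambda_n(u_n)$ solving the Poisson equations $w_n^{u_n}(x) = c_n(x, u_n(x)) - \lambda_n(u_n) + \int_E w_{n+1}^{u_{n+1}}(y) P_n^{u_n(x)}(x, dy)$. -/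

import Mathlib

/-!
The relative value iterates `v_{k+1} = T v_k - (T v_k)(x̄)`, `v_0 = 0`, have increments whose
span is multiplied by at most `Δ_n` at each step (Dobrushin's inequality), so at step `k` it is
at most `Δ_n ⋯ Δ_{n+k-1} ‖c_{n+k}‖_sp`. Since the increments vanish at `x̄`, the iterates converge
with `|v_k| ≤ R_n`, and dominated convergence turns the recursion into the Poisson equation. The
difference of two solutions pinned at `x̄` solves the homogeneous equation, so its span is at most
`Δ_n ⋯ Δ_{n+k}` times a constant for every `k`, hence zero.
-/

open MeasureTheory Filter

/-- Span seminorm of a real-valued function. -/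
noncomputable def spanSeminorm {E : Type*} (v : E → ℝ) : ℝ :=
  ⨆ p : E × E, (v p.1 - v p.2)

open Finset Topology

lemma prod_range_succ_shift {M : Type*} [CommMonoid M] (Δ : ℕ → M) (n k : ℕ) :
    ∏ j ∈ range (k + 1), Δ (n + j) = Δ n * ∏ j ∈ range k, Δ (n + 1 + j) := by
  rw [prod_range_succ', add_zero, mul_comm]
  simp only [add_assoc, add_comm 1]

lemma abs_le_tsum_of_dist_succ_le {f d : ℕ → ℝ} (hf : f 0 = 0)
    (hd : ∀ k, dist (f k) (f (k + 1)) ≤ d k) (hsum : Summable d) (k : ℕ) : |f k| ≤ ∑' i, d i :=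
  calc |f k| = dist (f 0) (f k) := by rw [hf, dist_comm, Real.dist_0_eq_abs]
    _ ≤ ∑ i ∈ Ico 0 k, d i := dist_le_Ico_sum_of_dist_le (Nat.zero_le k) fun {i} _ _ => hd i
    _ ≤ ∑' i, d i := hsum.sum_le_tsum _ fun i _ => dist_nonneg.trans (hd i)

lemma exists_abs_le_of_forall_sub_le {E : Type*} {g : E → ℝ} {S : ℝ} (x₀ : E)
    (hg : ∀ x y, g x - g y ≤ S) : ∃ M, ∀ x, |g x| ≤ M :=
  ⟨|g x₀| + S, fun x => abs_le.2
    ⟨by linarith [hg x₀ x, neg_abs_le (g x₀)], by linarith [hg x x₀, le_abs_self (g x₀)]⟩⟩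

section Dobrushin

variable {E : Type*} [MeasurableSpace E]

lemma integrable_of_abs_le {μ : Measure E} [IsFiniteMeasure μ] {g : E → ℝ} (hg : Measurable g)
    {M : ℝ} (hM : ∀ x, |g x| ≤ M) : Integrable g μ :=
  .of_bound hg.aestronglyMeasurable M
    (ae_of_all _ fun x => (Real.norm_eq_abs (g x)).trans_le (hM x))

lemma abs_integral_le_of_abs_le {μ : Measure E} [IsProbabilityMeasure μ] {g : E → ℝ} {M : ℝ}
    (hM : ∀ x, |g x| ≤ M) : |∫ x, g x ∂μ| ≤ M := by
  simpa using norm_integral_le_of_norm_le_const (μ := μ)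
    (ae_of_all _ fun x => (Real.norm_eq_abs (g x)).trans_le (hM x))

/-- The Hahn decomposition of `μ - ν` reduces this to `μ A - ν A ≤ D` on its positive set `A`. -/
lemma integral_sub_integral_le_mul_of_nonneg_of_le {μ ν : Measure E} [IsFiniteMeasure μ]
    [IsFiniteMeasure ν] {g : E → ℝ} (hg : Measurable g) {D S : ℝ} (hS : 0 ≤ S)
    (hg0 : ∀ x, 0 ≤ g x) (hgS : ∀ x, g x ≤ S)
    (hD : ∀ B, MeasurableSet B → (μ B).toReal - (ν B).toReal ≤ D) :
    ∫ x, g x ∂μ - ∫ x, g x ∂ν ≤ D * S := by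
  have hint : ∀ (m : Measure E) [IsFiniteMeasure m], Integrable g m := fun m _ =>
    integrable_of_abs_le hg fun x => abs_le.2 ⟨by linarith [hg0 x], hgS x⟩
  obtain ⟨A, hA, hνμ, hμν⟩ := hahn_decomposition μ ν
  have hle : ν.restrict A ≤ μ.restrict A := Measure.le_iff.2 fun s hs => by
    simp only [Measure.restrict_apply hs]
    exact hνμ _ (hs.inter hA) Set.inter_subset_right
  have hle' : μ.restrict Aᶜ ≤ ν.restrict Aᶜ := Measure.le_iff.2 fun s hs => by
    simp only [Measure.restrict_apply hs]
    exact hμν _ (hs.inter hA.compl) Set.inter_subset_right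
  set ρ := μ.restrict A - ν.restrict A
  have hρ_univ : ρ.real Set.univ ≤ D := by
    rw [measureReal_def, Measure.sub_apply .univ hle,
      ENNReal.toReal_sub_of_le (Measure.le_iff'.1 hle _) (measure_ne_top _ _)]
    simpa using hD A hA
  have hpos : ∫ x, g x ∂μ.restrict A - ∫ x, g x ∂ν.restrict A ≤ D * S := calc
    _ = ∫ x, g x ∂ρ := by
      rw [← Measure.sub_add_cancel_of_le hle, integral_add_measure (hint _) (hint _)]
      ring
    _ ≤ ∫ _, S ∂ρ := integral_mono (hint ρ) (integrable_const S) hgS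
    _ = ρ.real Set.univ * S := by rw [integral_const, smul_eq_mul]
    _ ≤ D * S := mul_le_mul_of_nonneg_right hρ_univ hS
  have hneg : ∫ x, g x ∂μ.restrict Aᶜ ≤ ∫ x, g x ∂ν.restrict Aᶜ :=
    integral_mono_measure hle' (ae_of_all _ hg0) (hint _)
  rw [← integral_add_compl hA (hint μ), ← integral_add_compl hA (hint ν)]
  linarith

/-- Dobrushin's inequality. -/
theorem integral_sub_integral_le_mul_of_forall_sub_le {μ ν : Measure E} [IsProbabilityMeasure μ]
    [IsProbabilityMeasure ν] {g : E → ℝ} (hg : Measurable g) {D S : ℝ}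
    (hD : ∀ B, MeasurableSet B → (μ B).toReal - (ν B).toReal ≤ D)
    (hgS : ∀ x y, g x - g y ≤ S) :
    ∫ x, g x ∂μ - ∫ x, g x ∂ν ≤ D * S := by
  obtain ⟨x₀⟩ := nonempty_of_isProbabilityMeasure μ
  have : Nonempty E := ⟨x₀⟩
  obtain ⟨M, hM⟩ := exists_abs_le_of_forall_sub_le x₀ hgS
  have hbdd : BddBelow (Set.range g) := ⟨g x₀ - S, by rintro _ ⟨x, rfl⟩; linarith [hgS x₀ x]⟩
  set b := ⨅ x, g x
  have hb : ∀ x, g x - S ≤ b := fun x => le_ciInf fun y => by linarith [hgS x y]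
  have hshift := integral_sub_integral_le_mul_of_nonneg_of_le (μ := μ) (ν := ν) (S := S)
    (hg.sub_const b) (by linarith [hgS x₀ x₀]) (fun x => sub_nonneg.2 (ciInf_le hbdd x))
    (fun x => by linarith [hb x]) hD
  rwa [integral_sub (integrable_of_abs_le hg hM) (integrable_const b),
    integral_sub (integrable_of_abs_le hg hM) (integrable_const b), integral_const,
    integral_const, probReal_univ, probReal_univ, sub_sub_sub_cancel_right] at hshift

end Dobrushin

section Poisson

variable {E : Type*} [MeasurableSpace E] (Q : ℕ → E → Measure E) (r : ℕ → E → ℝ)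

def HasDobrushinBound (Δ : ℕ → ℝ) : Prop :=
  ∀ n x x' B, MeasurableSet B → (Q n x B).toReal - (Q n x' B).toReal ≤ Δ n

def IsPoissonSolution (w : ℕ → E → ℝ) (l : ℕ → ℝ) : Prop :=
  ∀ n x, w n x = r n x - l n + ∫ y, w (n + 1) y ∂Q n x

noncomputable def relativeValueIterate (xbar : E) : ℕ → ℕ → E → ℝ
  | 0 => fun _ _ => 0
  | k + 1 => fun n x => (r n x + ∫ y, relativeValueIterate xbar k (n + 1) y ∂Q n x)
      - (r n xbar + ∫ y, relativeValueIterate xbar k (n + 1) y ∂Q n xbar)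

variable {Q r} {xbar : E}

lemma relativeValueIterate_apply_self (k n : ℕ) : relativeValueIterate Q r xbar k n xbar = 0 := by
  cases k <;> simp [relativeValueIterate]

variable [∀ n x, IsProbabilityMeasure (Q n x)] {Δ : ℕ → ℝ}

/-- With `f` constant in `k` this also covers the difference of two Poisson solutions. -/
theorem sub_le_prod_mul_of_sub_eq_integral_sub
    (hΔ : HasDobrushinBound Q Δ)
    {f : ℕ → ℕ → E → ℝ} (hf : ∀ k n, Measurable (f k n)) {s : ℕ → ℝ}
    (h0 : ∀ n x y, f 0 n x - f 0 n y ≤ s n)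
    (hsucc : ∀ k n x y, f (k + 1) n x - f (k + 1) n y =
      ∫ z, f k (n + 1) z ∂Q n x - ∫ z, f k (n + 1) z ∂Q n y) :
    ∀ k n x y, f k n x - f k n y ≤ (∏ j ∈ range k, Δ (n + j)) * s (n + k) := by
  intro k
  induction k with
  | zero => simpa using h0
  | succ k ih =>
    intro n x y
    rw [hsucc, ← add_assoc, add_right_comm, prod_range_succ_shift, mul_assoc]
    exact integral_sub_integral_le_mul_of_forall_sub_le (hf k (n + 1)) (hΔ n x y)
      (ih (n + 1))

lemma relativeValueIterate_measurable_bounded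
    (hQm : ∀ n (g : E → ℝ), Measurable g → (∃ M, ∀ x, |g x| ≤ M) →
      Measurable fun x => ∫ y, g y ∂Q n x)
    (hr : ∀ n, Measurable (r n)) (hrb : ∀ n, ∃ M, ∀ x, |r n x| ≤ M) (k n : ℕ) :
    Measurable (relativeValueIterate Q r xbar k n) ∧
      ∃ M, ∀ x, |relativeValueIterate Q r xbar k n x| ≤ M := by
  induction k generalizing n with
  | zero => exact ⟨measurable_const, 0, by simp [relativeValueIterate]⟩
  | succ k ih =>
    obtain ⟨hm, M, hM⟩ := ih (n + 1)
    obtain ⟨Mr, hMr⟩ := hrb n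
    have hbound :
        ∀ z, |r n z + ∫ y, relativeValueIterate Q r xbar k (n + 1) y ∂Q n z| ≤ Mr + M := fun z =>
      (abs_add_le _ _).trans (add_le_add (hMr z) (abs_integral_le_of_abs_le hM))
    exact ⟨((hr n).add (hQm n _ hm ⟨M, hM⟩)).sub_const _, 2 * (Mr + M),
      fun x => (abs_sub _ _).trans (by linarith [hbound x, hbound xbar])⟩

theorem relativeValueIterate_succ_sub_sub_le
    (hΔ : HasDobrushinBound Q Δ)
    (hQm : ∀ n (g : E → ℝ), Measurable g → (∃ M, ∀ x, |g x| ≤ M) →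
      Measurable fun x => ∫ y, g y ∂Q n x)
    (hr : ∀ n, Measurable (r n)) {cs : ℕ → ℝ} (hcs : ∀ n x y, r n x - r n y ≤ cs n)
    (k n : ℕ) (x y : E) :
    (relativeValueIterate Q r xbar (k + 1) n x - relativeValueIterate Q r xbar k n x)
      - (relativeValueIterate Q r xbar (k + 1) n y - relativeValueIterate Q r xbar k n y)
      ≤ (∏ j ∈ range k, Δ (n + j)) * cs (n + k) := by
  have hW := relativeValueIterate_measurable_bounded (xbar := xbar) hQm hr
    fun n => exists_abs_le_of_forall_sub_le xbar (hcs n)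
  have hint : ∀ k m n z, Integrable (relativeValueIterate Q r xbar k m) (Q n z) :=
    fun k m _ _ => integrable_of_abs_le (hW k m).1 (hW k m).2.choose_spec
  refine sub_le_prod_mul_of_sub_eq_integral_sub hΔ (f := fun k n x =>
      relativeValueIterate Q r xbar (k + 1) n x - relativeValueIterate Q r xbar k n x)
    (fun k n => (hW (k + 1) n).1.sub (hW k n).1) (fun n x y => ?_) (fun k n x y => ?_) k n x y
  · simpa [relativeValueIterate] using hcs n x y
  · rw [integral_sub (hint ..) (hint ..), integral_sub (hint ..) (hint ..)]
    simp only [relativeValueIterate]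
    ring

lemma dist_relativeValueIterate_succ_le
    (hΔ : HasDobrushinBound Q Δ)
    (hQm : ∀ n (g : E → ℝ), Measurable g → (∃ M, ∀ x, |g x| ≤ M) →
      Measurable fun x => ∫ y, g y ∂Q n x)
    (hr : ∀ n, Measurable (r n)) {cs : ℕ → ℝ} (hcs : ∀ n x y, r n x - r n y ≤ cs n)
    (k n : ℕ) (x : E) :
    dist (relativeValueIterate Q r xbar k n x) (relativeValueIterate Q r xbar (k + 1) n x)
      ≤ (∏ j ∈ range k, Δ (n + j)) * cs (n + k) := by
  have h := relativeValueIterate_succ_sub_sub_le (xbar := xbar) hΔ hQm hr hcs k n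
  have h₁ := h x xbar
  have h₂ := h xbar x
  simp only [relativeValueIterate_apply_self, sub_zero, zero_sub] at h₁ h₂
  rw [Real.dist_eq, abs_sub_comm, abs_le]
  constructor <;> linarith

theorem isPoissonSolution_of_tendsto_relativeValueIterate {w : ℕ → E → ℝ}
    (hWm : ∀ k n, Measurable (relativeValueIterate Q r xbar k n)) {B : ℝ}
    (hWB : ∀ k n x, |relativeValueIterate Q r xbar k n x| ≤ B)
    (hW : ∀ n x, Tendsto (fun k => relativeValueIterate Q r xbar k n x) atTop (𝓝 (w n x))) :
    IsPoissonSolution Q r w fun n => r n xbar + ∫ y, w (n + 1) y ∂Q n xbar := by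
  intro n x
  have hI : ∀ z, Tendsto (fun k => ∫ y, relativeValueIterate Q r xbar k (n + 1) y ∂Q n z) atTop
      (𝓝 (∫ y, w (n + 1) y ∂Q n z)) := fun z =>
    tendsto_integral_of_dominated_convergence (fun _ => B)
      (fun k => (hWm k (n + 1)).aestronglyMeasurable) (integrable_const B)
      (fun k => ae_of_all _ fun y => (Real.norm_eq_abs _).trans_le (hWB k (n + 1) y))
      (ae_of_all _ (hW (n + 1)))
  have hsucc := (hW n x).comp (tendsto_add_atTop_nat 1)
  have h := tendsto_nhds_unique hsucc
    (((hI x).const_add (r n x)).sub ((hI xbar).const_add (r n xbar)))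
  rw [h]
  ring

theorem exists_isPoissonSolution
    (hΔ : HasDobrushinBound Q Δ)
    (hQm : ∀ n (g : E → ℝ), Measurable g → (∃ M, ∀ x, |g x| ≤ M) →
      Measurable fun x => ∫ y, g y ∂Q n x)
    (hr : ∀ n, Measurable (r n)) {cs : ℕ → ℝ} (hcs : ∀ n x y, r n x - r n y ≤ cs n)
    (hsum : ∀ n, Summable fun i => (∏ j ∈ range i, Δ (n + j)) * cs (n + i)) {B : ℝ}
    (hB : ∀ n, ∑' i, (∏ j ∈ range i, Δ (n + j)) * cs (n + i) ≤ B) (xbar : E) :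
    ∃ (w : ℕ → E → ℝ) (l : ℕ → ℝ), (∀ n, Measurable (w n)) ∧ (∃ C, ∀ n x, |w n x| ≤ C) ∧
      (∀ n, w n xbar = 0) ∧ IsPoissonSolution Q r w l := by
  have hd := dist_relativeValueIterate_succ_le (xbar := xbar) hΔ hQm hr hcs
  have hW : ∀ n x, Tendsto (fun k => relativeValueIterate Q r xbar k n x) atTop
      (𝓝 (limUnder atTop fun k => relativeValueIterate Q r xbar k n x)) := fun n x =>
    (cauchySeq_of_dist_le_of_summable _ (hd · n x) (hsum n)).tendsto_limUnder
  have hWB : ∀ k n x, |relativeValueIterate Q r xbar k n x| ≤ B := fun k n x =>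
    (abs_le_tsum_of_dist_succ_le rfl (hd · n x) (hsum n) k).trans (hB n)
  have hWm : ∀ k n, Measurable (relativeValueIterate Q r xbar k n) := fun k n =>
    (relativeValueIterate_measurable_bounded hQm hr
      (fun n => exists_abs_le_of_forall_sub_le xbar (hcs n)) k n).1
  refine ⟨_, _, fun n => measurable_of_tendsto_metrizable (hWm · n) (tendsto_pi_nhds.2 (hW n)),
    ⟨B, fun n x => le_of_tendsto (hW n x).abs (.of_forall fun k => hWB k n x)⟩,
    fun n => tendsto_nhds_unique (hW n xbar) ?_,
    isPoissonSolution_of_tendsto_relativeValueIterate hWm hWB hW⟩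
  simp only [relativeValueIterate_apply_self, tendsto_const_nhds]

lemma IsPoissonSolution.sub_sub_eq_integral_sub {w w' : ℕ → E → ℝ} {l l' : ℕ → ℝ}
    (hw : IsPoissonSolution Q r w l) (hw' : IsPoissonSolution Q r w' l')
    (hwm : ∀ n, Measurable (w n)) (hw'm : ∀ n, Measurable (w' n)) {C C' : ℝ}
    (hwC : ∀ n x, |w n x| ≤ C) (hw'C : ∀ n x, |w' n x| ≤ C') (n : ℕ) (x y : E) :
    (w' n x - w n x) - (w' n y - w n y) =
      ∫ z, w' (n + 1) z - w (n + 1) z ∂Q n x - ∫ z, w' (n + 1) z - w (n + 1) z ∂Q n y := by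
  have hint : ∀ z, Integrable (w (n + 1)) (Q n z) := fun _ =>
    integrable_of_abs_le (hwm _) (hwC _)
  have hint' : ∀ z, Integrable (w' (n + 1)) (Q n z) := fun _ =>
    integrable_of_abs_le (hw'm _) (hw'C _)
  rw [integral_sub (hint' x) (hint x), integral_sub (hint' y) (hint y), hw n x, hw n y, hw' n x,
    hw' n y]
  ring

theorem IsPoissonSolution.eq_of_apply_eq_zero
    (hΔ : HasDobrushinBound Q Δ)
    (hprod : ∀ n, Tendsto (fun k => ∏ i ∈ range (k + 1), Δ (n + i)) atTop (𝓝 0))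
    {w w' : ℕ → E → ℝ} {l l' : ℕ → ℝ}
    (hw : IsPoissonSolution Q r w l) (hw' : IsPoissonSolution Q r w' l')
    (hwm : ∀ n, Measurable (w n)) (hw'm : ∀ n, Measurable (w' n)) {C C' : ℝ}
    (hwC : ∀ n x, |w n x| ≤ C) (hw'C : ∀ n x, |w' n x| ≤ C')
    (hw0 : ∀ n, w n xbar = 0) (hw'0 : ∀ n, w' n xbar = 0) : w' = w ∧ l' = l := by
  have hosc := sub_le_prod_mul_of_sub_eq_integral_sub hΔ (f := fun _ n x => w' n x - w n x)
    (s := fun _ => 2 * (C + C')) (fun _ n => (hw'm n).sub (hwm n))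
    (fun n x y => by
      linarith [abs_le.1 (hwC n x), abs_le.1 (hwC n y), abs_le.1 (hw'C n x), abs_le.1 (hw'C n y)])
    (fun _ => hw.sub_sub_eq_integral_sub hw' hwm hw'm hwC hw'C)
  have heq : ∀ n x, w' n x = w n x := by
    intro n x
    have hlim := (hprod n).mul_const (2 * (C + C'))
    rw [zero_mul] at hlim
    have h₁ : w' n x - w n x ≤ 0 := ge_of_tendsto hlim
      (.of_forall fun k => by simpa [hw0, hw'0] using hosc (k + 1) n x xbar)
    have h₂ : w n x - w' n x ≤ 0 := ge_of_tendsto hlim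
      (.of_forall fun k => by simpa [hw0, hw'0] using hosc (k + 1) n xbar x)
    linarith
  have hww : w' = w := funext fun n => funext (heq n)
  refine ⟨hww, funext fun n => ?_⟩
  have h := hw n xbar
  have h' := hw' n xbar
  rw [hww] at h'
  linarith

end Poisson

theorem stmt_15_general {E U : Type*} [MeasurableSpace E]
    (P : ℕ → U → E → Measure E) (hP : ∀ n a x, IsProbabilityMeasure (P n a x))
    (u : ℕ → E → U)
    (hPm : ∀ n (g : E → ℝ), Measurable g → (∃ M, ∀ x, |g x| ≤ M) →
      Measurable fun x => ∫ y, g y ∂(P n (u n x) x))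
    (c : ℕ → E → U → ℝ)
    (hcm : ∀ n, Measurable fun x => c n x (u n x))
    (Δ cs : ℕ → ℝ)
    (hΔ : ∀ n x x' a a' (B : Set E), MeasurableSet B →
      (P n a x B).toReal - (P n a' x' B).toReal ≤ Δ n)
    (hcs : ∀ n x x' a a', c n x a - c n x' a' ≤ cs n)
    (hprod : ∀ n, Tendsto (fun k => ∏ i ∈ Finset.range (k + 1), Δ (n + i)) atTop (nhds 0))
    (hsum : ∀ n, Summable fun i => (∏ j ∈ Finset.range (i + 1), Δ (n + j)) * cs (n + i + 1))
    (hsupR : ∃ B, ∀ n,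
      cs n + ∑' i, (∏ j ∈ Finset.range (i + 1), Δ (n + j)) * cs (n + i + 1) ≤ B)
    (xbar : E) :
    ∃ (w : ℕ → E → ℝ) (l : ℕ → ℝ),
      (∀ n, Measurable (w n)) ∧ (∃ C, ∀ n x, |w n x| ≤ C) ∧
      (∀ n, w n xbar = 0) ∧
      (∀ n x, w n x = c n x (u n x) - l n + ∫ y, w (n + 1) y ∂(P n (u n x) x)) ∧
      ∀ (w' : ℕ → E → ℝ) (l' : ℕ → ℝ),
        (∀ n, Measurable (w' n)) → (∃ C, ∀ n x, |w' n x| ≤ C) →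
        (∀ n, w' n xbar = 0) →
        (∀ n x, w' n x = c n x (u n x) - l' n + ∫ y, w' (n + 1) y ∂(P n (u n x) x)) →
        w' = w ∧ l' = l := by
  have : ∀ n x, IsProbabilityMeasure (P n (u n x) x) := fun n x => hP n (u n x) x
  have hΔu : HasDobrushinBound (fun n x => P n (u n x) x) Δ := fun n x x' => hΔ n x x' _ _
  have hsum₀ : ∀ n, Summable fun i => (∏ j ∈ range i, Δ (n + j)) * cs (n + i) :=
    fun n => (summable_nat_add_iff 1).1 (hsum n)
  obtain ⟨B, hB⟩ := hsupR
  have hR : ∀ n, ∑' i, (∏ j ∈ range i, Δ (n + j)) * cs (n + i) ≤ B := fun n => by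
    rw [(hsum₀ n).tsum_eq_zero_add]
    simpa [add_assoc] using hB n
  obtain ⟨w, l, hwm, ⟨C, hwC⟩, hw0, hw⟩ := exists_isPoissonSolution hΔu hPm hcm
    (fun n x x' => hcs n x x' _ _) hsum₀ hR xbar
  exact ⟨w, l, hwm, ⟨C, hwC⟩, hw0, hw, fun w' l' hw'm ⟨_, hw'C⟩ hw'0 hw' =>
    hw.eq_of_apply_eq_zero hΔu hprod hw' hwm hw'm hwC hw'C hw0 hw'0⟩

theorem stmt_15 {E U : Type*} [MeasurableSpace E] [Nonempty E]
    (P : ℕ → U → E → Measure E) (hP : ∀ n a x, IsProbabilityMeasure (P n a x))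
    (u : ℕ → E → U)
    (hPm : ∀ n (g : E → ℝ), Measurable g → (∃ M, ∀ x, |g x| ≤ M) →
      Measurable fun x => ∫ y, g y ∂(P n (u n x) x))
    (c : ℕ → E → U → ℝ)
    (hcm : ∀ n, Measurable fun x => c n x (u n x))
    (hcb : ∀ n, ∃ M, ∀ x a, |c n x a| ≤ M)
    (Δ cs : ℕ → ℝ) (hΔ0 : ∀ n, 0 ≤ Δ n) (hcs0 : ∀ n, 0 ≤ cs n)
    (hΔ : ∀ n x x' a a' (B : Set E), MeasurableSet B →
      (P n a x B).toReal - (P n a' x' B).toReal ≤ Δ n)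
    (hcs : ∀ n x x' a a', c n x a - c n x' a' ≤ cs n)
    (hprod : ∀ n, Tendsto (fun k => ∏ i ∈ Finset.range (k + 1), Δ (n + i)) atTop (nhds 0))
    (hsum : ∀ n, Summable fun i => (∏ j ∈ Finset.range (i + 1), Δ (n + j)) * cs (n + i + 1))
    (hsupR : ∃ B, ∀ n,
      cs n + ∑' i, (∏ j ∈ Finset.range (i + 1), Δ (n + j)) * cs (n + i + 1) ≤ B)
    (xbar : E) :
    ∃ (w : ℕ → E → ℝ) (l : ℕ → ℝ),
      (∀ n, Measurable (w n)) ∧ (∃ C, ∀ n x, |w n x| ≤ C) ∧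
      (∀ n, w n xbar = 0) ∧
      (∀ n x, w n x = c n x (u n x) - l n + ∫ y, w (n + 1) y ∂(P n (u n x) x)) ∧
      ∀ (w' : ℕ → E → ℝ) (l' : ℕ → ℝ),
        (∀ n, Measurable (w' n)) → (∃ C, ∀ n x, |w' n x| ≤ C) →
        (∀ n, w' n xbar = 0) →
        (∀ n x, w' n x = c n x (u n x) - l' n + ∫ y, w' (n + 1) y ∂(P n (u n x) x)) →
        w' = w ∧ l' = l :=
  stmt_15_general P hP u hPm c hcm Δ cs hΔ hcs hprod hsum hsupR xbar
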